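/- arXiv:2107.09794 — 2 statements merged into one kernel-verified Lean document; each statement's English description precedes it below -/
import Mathlib

section
/- Quantum advantage in hypothesis testing (Proposition 1, strictness part): let ρ₀ = [[1,0],[0,0]] and σ₁ = (1/2)[[1,1],[1,1]] be 2×2 Hermitian positive semidefinite matrices of trace 1. For any ε ∈ (0, 4/5), the matrix A' = [[1-ε, -√(ε(1-ε))],[-√(ε(1-ε)), ε]] satisfies 0 ⪯ A' ⪯ I, Tr(ρ₀ A') = 1-ε ≥ 1-ε, and Tr(σ₁ A') = (1/2)(1 - 2√(ε(1-ε))) < (1/2)(1-ε). Consequently ξ_H^ε(ρ₀‖σ₁) < (1-ε)/2, strictly beating the classical bound achievable when the alternative is the diagonal mixture (1/2)I. -/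
open Matrix
open scoped ComplexOrder

/-- Quantum one-shot hypothesis testing quantity for 2×2 states. -/
noncomputable def xiQ2 (ε : ℝ) (ρ σ : Matrix (Fin 2) (Fin 2) ℂ) : ℝ :=
  sInf {r : ℝ | ∃ A : Matrix (Fin 2) (Fin 2) ℂ, A.PosSemidef ∧ (1 - A).PosSemidef ∧
    1 - ε ≤ (ρ * A).trace.re ∧ r = (σ * A).trace.re}

/-!
The test `A'` is the orthogonal projection onto the unit vector `(√(1-ε), -√ε)`, so both `A'`
and `I - A'` are projections, hence positive semidefinite. Its overlap with `|0⟩` is exactly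
`1 - ε`, while its overlap with `|+⟩` is `(1 - 2√(ε(1-ε)))/2`, which is below `(1 - ε)/2` iff
`(ε/2)² < ε(1-ε)`, i.e. iff `ε < 4/5`. Finally `ξ` is an infimum of numbers `Tr(σA) ≥ 0`, so it is
at most the value of any admissible test.
-/

open scoped MatrixOrder

namespace Matrix

variable {n 𝕜 : Type*} [Fintype n] [RCLike 𝕜]

lemma isStarProjection_vecMulVec_self_star {u : n → 𝕜} (hu : star u ⬝ᵥ u = 1) :
    IsStarProjection (vecMulVec u (star u)) where
  isIdempotentElem := by
    rw [IsIdempotentElem, vecMulVec_mul_vecMulVec, hu, one_smul]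
  isSelfAdjoint := by
    rw [IsSelfAdjoint, star_eq_conjTranspose, conjTranspose_vecMulVec, star_star]

lemma PosSemidef.trace_mul_nonneg {A B : Matrix n n 𝕜} (hA : A.PosSemidef) (hB : B.PosSemidef) :
    0 ≤ (A * B).trace := by
  classical
  obtain ⟨C, rfl⟩ := CStarAlgebra.nonneg_iff_eq_star_mul_self.mp hA.nonneg
  rw [star_eq_conjTranspose, Matrix.mul_assoc, trace_mul_comm]
  exact (hB.mul_mul_conjTranspose_same C).trace_nonneg

end Matrix

lemma xiQ2_le {ε : ℝ} {ρ σ A : Matrix (Fin 2) (Fin 2) ℂ} (hσ : σ.PosSemidef)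
    (hA : A.PosSemidef) (hIA : (1 - A).PosSemidef) (hρA : 1 - ε ≤ (ρ * A).trace.re) :
    xiQ2 ε ρ σ ≤ (σ * A).trace.re := by
  refine csInf_le ⟨0, ?_⟩ ⟨A, hA, hIA, hρA, rfl⟩
  rintro _ ⟨B, hB, -, -, rfl⟩
  exact (Complex.le_def.mp (hσ.trace_mul_nonneg hB)).1

lemma isStarProjection_sqrt_mul_one_sub {ε : ℝ} (h0 : 0 ≤ ε) (h1 : ε ≤ 1) :
    IsStarProjection (!![(1 - ε : ℝ), (-√(ε * (1 - ε)) : ℝ); (-√(ε * (1 - ε)) : ℝ), (ε : ℝ)] :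
      Matrix (Fin 2) (Fin 2) ℂ) := by
  have h1' : 0 ≤ 1 - ε := sub_nonneg.mpr h1
  have hu : star ![(√(1 - ε) : ℂ), -(√ε : ℂ)] ⬝ᵥ ![(√(1 - ε) : ℂ), -(√ε : ℂ)] = 1 := by
    simp [dotProduct, ← Complex.ofReal_mul, Real.mul_self_sqrt h0, Real.mul_self_sqrt h1']
  convert isStarProjection_vecMulVec_self_star hu using 1
  ext i j
  fin_cases i <;> fin_cases j <;>
    simp [vecMulVec_apply, ← Complex.ofReal_mul, Real.mul_self_sqrt h0, Real.mul_self_sqrt h1',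
      Real.sqrt_mul h0, mul_comm]

lemma posSemidef_half_smul_ones :
    ((1 / 2 : ℂ) • !![1, 1; 1, 1] : Matrix (Fin 2) (Fin 2) ℂ).PosSemidef := by
  have hones : !![1, 1; 1, 1] = vecMulVec ![(1 : ℂ), 1] (star ![1, 1]) := by
    ext i j
    fin_cases i <;> fin_cases j <;> simp [vecMulVec_apply]
  rw [hones]
  exact (posSemidef_vecMulVec_self_star _).smul (by norm_num [Complex.le_def])

lemma lt_two_mul_sqrt_mul_one_sub {ε : ℝ} (h0 : 0 < ε) (h1 : ε < 4 / 5) :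
    ε < 2 * √(ε * (1 - ε)) := by
  have : ε / 2 < √(ε * (1 - ε)) := (Real.lt_sqrt (by positivity)).mpr (by nlinarith)
  linarith

/-- quantum advantage in hypothesis testing (Proposition 1,
strictness part). For `ρ₀ = |0⟩⟨0|` and `σ₁ = |+⟩⟨+|` and any `ε ∈ (0, 4/5)`,
the test `A' = [[1-ε, -√(ε(1-ε))],[-√(ε(1-ε)), ε]]` is a valid quantum decision
function with `Tr(ρ₀A') = 1-ε` and `Tr(σ₁A') = (1/2)(1 - 2√(ε(1-ε))) < (1/2)(1-ε)`,
whence `ξ_H^ε(ρ₀‖σ₁) < (1-ε)/2`. -/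
theorem quantum_advantage (ε : ℝ) (hε : ε ∈ Set.Ioo (0:ℝ) (4/5)) :
    letI ρ₀ : Matrix (Fin 2) (Fin 2) ℂ := !![1, 0; 0, 0]
    letI σ₁ : Matrix (Fin 2) (Fin 2) ℂ := (1/2 : ℂ) • !![1, 1; 1, 1]
    letI s : ℝ := Real.sqrt (ε * (1 - ε))
    letI A' : Matrix (Fin 2) (Fin 2) ℂ := !![(1 - ε : ℝ), (-s : ℝ); (-s : ℝ), (ε : ℝ)]
    A'.PosSemidef ∧ (1 - A').PosSemidef ∧
    (ρ₀ * A').trace.re = 1 - ε ∧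
    (σ₁ * A').trace.re = (1/2) * (1 - 2 * s) ∧
    (σ₁ * A').trace.re < (1/2) * (1 - ε) ∧
    xiQ2 ε ρ₀ σ₁ < (1 - ε) / 2 := by
  obtain ⟨hε0, hε1⟩ := hε
  set s : ℝ := √(ε * (1 - ε))
  set A' : Matrix (Fin 2) (Fin 2) ℂ := !![(1 - ε : ℝ), (-s : ℝ); (-s : ℝ), (ε : ℝ)]
  set ρ₀ : Matrix (Fin 2) (Fin 2) ℂ := !![1, 0; 0, 0]
  set σ₁ : Matrix (Fin 2) (Fin 2) ℂ := (1/2 : ℂ) • !![1, 1; 1, 1]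
  have hA' : IsStarProjection A' := isStarProjection_sqrt_mul_one_sub hε0.le (by linarith)
  have hρ₀A' : (ρ₀ * A').trace.re = 1 - ε := by simp [ρ₀, A', trace]
  have hσ₁A' : (σ₁ * A').trace.re = 1 / 2 * (1 - 2 * s) := by
    have : (σ₁ * A').trace = ((1 / 2 * (1 - 2 * s) : ℝ) : ℂ) := by
      simp only [σ₁, A', smul_mul, mul_fin_two, trace_smul, trace_fin_two_of, smul_eq_mul]
      push_cast
      ring
    rw [this, Complex.ofReal_re]
  have hlt : (σ₁ * A').trace.re < 1 / 2 * (1 - ε) := by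
    rw [hσ₁A']
    linarith [lt_two_mul_sqrt_mul_one_sub hε0 hε1]
  refine ⟨hA'.nonneg.posSemidef, hA'.one_sub_nonneg.posSemidef, hρ₀A', hσ₁A', hlt, ?_⟩
  calc xiQ2 ε ρ₀ σ₁ ≤ (σ₁ * A').trace.re :=
        xiQ2_le posSemidef_half_smul_ones hA'.nonneg.posSemidef hA'.one_sub_nonneg.posSemidef
          hρ₀A'.ge
    _ < (1 - ε) / 2 := by linarith
end

section
/- Relative entropy is constant in the signal power for the jittered-pulse model: fix g, s, c, q, δ with 0 < δ < 1, 0 < q < 1, and let n = 5, 𝒴 = {0,...,g}, κ := δ/(g+1)^5. For any integer power P with c < P < g - s + c, define x := P - c + s and the distributions on 𝒴^5 given by P₀(y) = (1-δ)1[y=(s,s,s,s,s)] + δ/(g+1)^5 and P₁(y) = (1-δ)[(1-q)1[y=(s,s,x,s,s)] + (q/2)1[y=(s,x,s,s,s)] + (q/2)1[y=(s,s,s,x,s)]] + δ/(g+1)^5. Then the Kullback–Leibler divergence D(P₀‖P₁) = −[1−δ+κ]·log(κ/(1−δ+κ)) − κ·[log(1 + (1−δ)(1−q)/κ) + 2·log(1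 + q(1−δ)/(2κ))], and in particular D(P₀‖P₁) does not depend on the value of P within the range c < P < g - s + c. -/
open Finset

/-- for the jittered-pulse model the Kullback–Leibler divergence
`D(P₀‖P₁)` equals an explicit constant that does not depend on the signal power
`P` in the range `c < P < g - s + c`. Sequences of length 5 over the power
alphabet `{0,…,g}` are modeled as `Fin 5 → Fin (g+1)`. -/
theorem kl_independent_of_power
    (g s c P : ℕ) (q δ : ℝ)
    (hδ : δ ∈ Set.Ioo (0:ℝ) 1) (hq : q ∈ Set.Ioo (0:ℝ) 1)
    (hs : s ≤ g) (hcP : c < P) (hPg : P + s < g + c) :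
    letI κ : ℝ := δ / (g + 1) ^ 5
    letI sF : Fin (g + 1) := ⟨s, by omega⟩
    letI xF : Fin (g + 1) := ⟨P - c + s, by omega⟩
    letI base : Fin 5 → Fin (g + 1) := fun _ => sF
    letI u₁ : Fin 5 → Fin (g + 1) := Function.update base 1 xF
    letI u₂ : Fin 5 → Fin (g + 1) := Function.update base 2 xF
    letI u₃ : Fin 5 → Fin (g + 1) := Function.update base 3 xF
    letI P₀ : (Fin 5 → Fin (g + 1)) → ℝ :=
      fun y => (1 - δ) * (if y = base then 1 else 0) + κ
    letI P₁ : (Fin 5 → Fin (g + 1)) → ℝ :=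
      fun y => (1 - δ) * ((1 - q) * (if y = u₂ then 1 else 0)
        + (q / 2) * (if y = u₁ then 1 else 0)
        + (q / 2) * (if y = u₃ then 1 else 0)) + κ
    (∑ y, P₀ y * Real.log (P₀ y / P₁ y))
      = -(1 - δ + κ) * Real.log (κ / (1 - δ + κ))
        - κ * (Real.log (1 + (1 - δ) * (1 - q) / κ)
          + 2 * Real.log (1 + q * (1 - δ) / (2 * κ))) := by

  obtain ⟨hδ0, hδ1⟩ := hδ
  obtain ⟨hq0, hq1⟩ := hq
  set κ : ℝ := δ / ((g : ℝ) + 1) ^ 5 with hκ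
  have hκ0 : 0 < κ := by positivity
  set sF : Fin (g + 1) := ⟨s, by omega⟩ with hsF
  set xF : Fin (g + 1) := ⟨P - c + s, by omega⟩ with hxF
  have hxs : xF ≠ sF := by
    simp only [hsF, hxF, Ne, Fin.mk.injEq]
    omega
  set base : Fin 5 → Fin (g + 1) := fun _ => sF with hbase
  set u₁ : Fin 5 → Fin (g + 1) := Function.update base 1 xF with hu₁
  set u₂ : Fin 5 → Fin (g + 1) := Function.update base 2 xF with hu₂
  set u₃ : Fin 5 → Fin (g + 1) := Function.update base 3 xF with hu₃
  have h12 : u₁ ≠ u₂ := fun h => hxs (by simpa [hu₁, hu₂, Function.update, hbase] using congrFun h 1)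
  have h13 : u₁ ≠ u₃ := fun h => hxs (by simpa [hu₁, hu₃, Function.update, hbase] using congrFun h 1)
  have h23 : u₂ ≠ u₃ := fun h => hxs (by simpa [hu₂, hu₃, Function.update, hbase] using congrFun h 2)
  have hb1 : base ≠ u₁ := fun h => hxs (by simpa [hu₁, Function.update, hbase] using (congrFun h 1).symm)
  have hb2 : base ≠ u₂ := fun h => hxs (by simpa [hu₂, Function.update, hbase] using (congrFun h 2).symm)
  have hb3 : base ≠ u₃ := fun h => hxs (by simpa [hu₃, Function.update, hbase] using (congrFun h 3).symm)
  have h1δ : (0:ℝ) < 1 - δ := by linarith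
  have hA : (0:ℝ) < (1 - δ) * (1 - q) + κ := by nlinarith
  have hB : (0:ℝ) < (1 - δ) * (q / 2) + κ := by nlinarith
  have hT : (0:ℝ) < 1 - δ + κ := by linarith
  rw [← Finset.sum_subset (Finset.subset_univ ({base, u₁, u₂, u₃} : Finset (Fin 5 → Fin (g + 1))))
    (by
      intro y _ hy
      simp only [Finset.mem_insert, Finset.mem_singleton, not_or] at hy
      obtain ⟨hy0, hy1, hy2, hy3⟩ := hy
      simp [hy0, hy1, hy2, hy3, div_self hκ0.ne'])]
  rw [Finset.sum_insert (by simp [hb1, hb2, hb3]),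
    Finset.sum_insert (by simp [h12, h13]),
    Finset.sum_insert (by simp [h23]),
    Finset.sum_singleton]
  have e1 : (1:ℝ) + (1 - δ) * (1 - q) / κ = ((1 - δ) * (1 - q) + κ) / κ := by
    field_simp; ring
  have e2 : (1:ℝ) + q * (1 - δ) / (2 * κ) = ((1 - δ) * (q / 2) + κ) / κ := by
    field_simp; ring
  simp only [if_pos rfl, if_neg hb1, if_neg hb2, if_neg hb3, if_neg h12, if_neg h13,
    if_neg h23, if_neg (Ne.symm hb1), if_neg (Ne.symm hb2), if_neg (Ne.symm hb3),
    if_neg (Ne.symm h12), if_neg (Ne.symm h13), if_neg (Ne.symm h23),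
    if_true, mul_zero, mul_one, add_zero, zero_add, e1, e2]
  rw [Real.log_div hT.ne' hκ0.ne', Real.log_div hκ0.ne' hT.ne',
    Real.log_div hκ0.ne' hA.ne', Real.log_div hκ0.ne' hB.ne',
    Real.log_div hA.ne' hκ0.ne', Real.log_div hB.ne' hκ0.ne']
  ring
end
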